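/- arXiv:quant-ph/9511026 — 3 statements merged into one kernel-verified Lean document; each statement's English description precedes it below -/
import Mathlib

section
/- Let V = (Fin n → ZMod 2), and consider the Hilbert space H = ℂ^(Fin 2 × V × V) with standard basis vectors e_{(a,u,v)}. Let X₁ be the (classical, permutation) unitary determined by e_{(a,u,v)} ↦ e_{(a,u, v + a·u)} and X₂ the one determined by e_{(a,u,v)} ↦ e_{(a, u + a·v, v)}, where a·w means w if a = 1 and 0 if a = 0. Let U be a unitary operator on ℂ^V with U e₀ = e₀ (e₀ the basis vector of the zero string), and let M = 1 ⊗ 1 ⊗ U act on H. Then for every a ∈ {0,1} and every ξ ∈ ℂ^V, the operator X₁ X₂ M X₂ X₁ maps e_a ⊗ ξ ⊗ e₀ to e_a ⊗ (U^a ξ) ⊗ e₀, where U⁰ = 1 and U¹ = U; i.e. this five-gate composition implements the controlled operator Λ(U) on the first two registers with the third register returned to the zero state. -/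
/-! All five gates are linear, so it suffices to check basis vectors `ξ = e_u`. With control `0`
the two copy gates act trivially and `M` fixes `e₀` in the third register. With control `1`,
`X₂ X₁` turns `e_u ⊗ e₀` into `e₀ ⊗ e_u`, `M` applies `U` to the third register, and `X₁ X₂`
(again checked on a basis) swaps `e₀ ⊗ U e_u` back to `U e_u ⊗ e₀`. -/

/-- The elementary tensor `f ⊗ g ⊗ h` in `ℂ^(Fin 2 × V × V) ≅ ℂ² ⊗ ℂ^V ⊗ ℂ^V`. -/
noncomputable def tp3 {n : ℕ} (f : Fin 2 → ℂ)
    (g h : (Fin n → ZMod 2) → ℂ) :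
    EuclideanSpace ℂ (Fin 2 × (Fin n → ZMod 2) × (Fin n → ZMod 2)) :=
  WithLp.toLp 2 (fun p : Fin 2 × (Fin n → ZMod 2) × (Fin n → ZMod 2) => f p.1 * g p.2.1 * h p.2.2)

theorem EuclideanSpace.linearMap_apply_eq_of_single {𝕜 ι W : Type*} [RCLike 𝕜] [Fintype ι]
    [DecidableEq ι] [AddCommMonoid W] [Module 𝕜 W] {F G : EuclideanSpace 𝕜 ι →ₗ[𝕜] W}
    (h : ∀ i, F (EuclideanSpace.single i 1) = G (EuclideanSpace.single i 1))
    (x : EuclideanSpace 𝕜 ι) : F x = G x :=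
  LinearMap.congr_fun ((EuclideanSpace.basisFun ι 𝕜).toBasis.ext fun i => by simpa using h i) x

section

variable {n : ℕ}

local notation "V" => Fin n → ZMod 2

theorem tp3_single (a : Fin 2) (u v : V) :
    tp3 (Pi.single a 1) (Pi.single u 1) (Pi.single v 1) = EuclideanSpace.single (a, u, v) 1 := by
  ext ⟨b, x, y⟩
  simp only [tp3, PiLp.toLp_apply, PiLp.single_apply, Pi.single_apply, Prod.mk.injEq]
  by_cases b = a <;> by_cases x = u <;> by_cases y = v <;> simp_all

@[simps]
noncomputable def tp3Mid (f : Fin 2 → ℂ) (h : V → ℂ) :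
    EuclideanSpace ℂ V →ₗ[ℂ] EuclideanSpace ℂ (Fin 2 × V × V) where
  toFun ξ := tp3 f ξ h
  map_add' ξ ζ := by ext; simp only [tp3, PiLp.toLp_apply, PiLp.add_apply]; ring
  map_smul' c ξ := by
    ext; simp only [tp3, PiLp.toLp_apply, PiLp.smul_apply, smul_eq_mul, RingHom.id_apply]; ring

@[simps]
noncomputable def tp3Right (f : Fin 2 → ℂ) (g : V → ℂ) :
    EuclideanSpace ℂ V →ₗ[ℂ] EuclideanSpace ℂ (Fin 2 × V × V) where
  toFun η := tp3 f g η
  map_add' η ζ := by ext; simp only [tp3, PiLp.toLp_apply, PiLp.add_apply]; ring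
  map_smul' c η := by
    ext; simp only [tp3, PiLp.toLp_apply, PiLp.smul_apply, smul_eq_mul, RingHom.id_apply]; ring

def IsControlledAddTo₃
    (X : EuclideanSpace ℂ (Fin 2 × V × V) →L[ℂ] EuclideanSpace ℂ (Fin 2 × V × V)) : Prop :=
  ∀ (a : Fin 2) (u v : V), X (EuclideanSpace.single (a, u, v) (1 : ℂ)) =
    EuclideanSpace.single (a, u, v + if a = 1 then u else 0) 1

def IsControlledAddTo₂
    (X : EuclideanSpace ℂ (Fin 2 × V × V) →L[ℂ] EuclideanSpace ℂ (Fin 2 × V × V)) : Prop :=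
  ∀ (a : Fin 2) (u v : V), X (EuclideanSpace.single (a, u, v) (1 : ℂ)) =
    EuclideanSpace.single (a, u + (if a = 1 then v else 0), v) 1

def ActsOnThirdFactorBy
    (M : EuclideanSpace ℂ (Fin 2 × V × V) →L[ℂ] EuclideanSpace ℂ (Fin 2 × V × V))
    (U : EuclideanSpace ℂ V →L[ℂ] EuclideanSpace ℂ V) : Prop :=
  ∀ (a : Fin 2) (u v : V), M (EuclideanSpace.single (a, u, v) (1 : ℂ)) =
    tp3 (Pi.single a 1) (Pi.single u 1) (U (EuclideanSpace.single v 1))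

variable {X₁ X₂ M : EuclideanSpace ℂ (Fin 2 × (Fin n → ZMod 2) × (Fin n → ZMod 2)) →L[ℂ]
    EuclideanSpace ℂ (Fin 2 × (Fin n → ZMod 2) × (Fin n → ZMod 2))}
  {U : EuclideanSpace ℂ (Fin n → ZMod 2) →L[ℂ] EuclideanSpace ℂ (Fin n → ZMod 2)}

theorem controlledAdds_swap (hX₁ : IsControlledAddTo₃ X₁)
    (hX₂ : IsControlledAddTo₂ X₂) (η : EuclideanSpace ℂ V) :
    X₁ (X₂ (tp3 (Pi.single 1 1) (Pi.single 0 1) η)) = tp3 (Pi.single 1 1) η (Pi.single 0 1) :=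
  EuclideanSpace.linearMap_apply_eq_of_single
    (F := X₁.toLinearMap ∘ₗ X₂.toLinearMap ∘ₗ tp3Right (Pi.single 1 1) (Pi.single 0 1))
    (G := tp3Mid (Pi.single 1 1) (Pi.single 0 1)) (fun w => by
      simp only [LinearMap.comp_apply, ContinuousLinearMap.coe_coe, tp3Right_apply, tp3Mid_apply,
        PiLp.ofLp_single, tp3_single, hX₁ _ _ _, hX₂ _ _ _, if_true, zero_add,
        ZModModule.add_self]) η

theorem gates_apply_tp3_control_zero (hX₁ : IsControlledAddTo₃ X₁) (hX₂ : IsControlledAddTo₂ X₂)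
    (hM : ActsOnThirdFactorBy M U) (hU0 : U (EuclideanSpace.single 0 1) = EuclideanSpace.single 0 1)
    (ξ : EuclideanSpace ℂ V) :
    X₁ (X₂ (M (X₂ (X₁ (tp3 (Pi.single 0 1) ξ (EuclideanSpace.single 0 1)))))) =
      tp3 (Pi.single 0 1) ξ (EuclideanSpace.single 0 1) :=
  EuclideanSpace.linearMap_apply_eq_of_single
    (F := X₁.toLinearMap ∘ₗ X₂.toLinearMap ∘ₗ M.toLinearMap ∘ₗ X₂.toLinearMap ∘ₗ X₁.toLinearMap ∘ₗ
      tp3Mid (Pi.single 0 1) (Pi.single 0 1))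
    (G := tp3Mid (Pi.single 0 1) (Pi.single 0 1)) (fun u => by
      simp only [LinearMap.comp_apply, ContinuousLinearMap.coe_coe, tp3Mid_apply,
        PiLp.ofLp_single, tp3_single, hX₁ _ _ _, hX₂ _ _ _, hM _ _ _, hU0, if_neg zero_ne_one,
        add_zero]) ξ

theorem gates_apply_tp3_control_one (hX₁ : IsControlledAddTo₃ X₁) (hX₂ : IsControlledAddTo₂ X₂)
    (hM : ActsOnThirdFactorBy M U) (ξ : EuclideanSpace ℂ V) :
    X₁ (X₂ (M (X₂ (X₁ (tp3 (Pi.single 1 1) ξ (EuclideanSpace.single 0 1)))))) =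
      tp3 (Pi.single 1 1) (U ξ) (EuclideanSpace.single 0 1) :=
  EuclideanSpace.linearMap_apply_eq_of_single
    (F := X₁.toLinearMap ∘ₗ X₂.toLinearMap ∘ₗ M.toLinearMap ∘ₗ X₂.toLinearMap ∘ₗ X₁.toLinearMap ∘ₗ
      tp3Mid (Pi.single 1 1) (Pi.single 0 1))
    (G := tp3Mid (Pi.single 1 1) (Pi.single 0 1) ∘ₗ U.toLinearMap) (fun u => by
      simp only [LinearMap.comp_apply, ContinuousLinearMap.coe_coe, tp3Mid_apply,
        PiLp.ofLp_single, tp3_single, hX₁ _ _ _, hX₂ _ _ _, hM _ _ _, if_true, zero_add,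
        ZModModule.add_self]
      exact controlledAdds_swap hX₁ hX₂ _) ξ

end

theorem stmt5_general (n : ℕ)
    (U : EuclideanSpace ℂ (Fin n → ZMod 2) →L[ℂ] EuclideanSpace ℂ (Fin n → ZMod 2))
    (hU0 : U (EuclideanSpace.single 0 1) = EuclideanSpace.single 0 1)
    (X₁ X₂ M : EuclideanSpace ℂ (Fin 2 × (Fin n → ZMod 2) × (Fin n → ZMod 2)) →L[ℂ]
      EuclideanSpace ℂ (Fin 2 × (Fin n → ZMod 2) × (Fin n → ZMod 2)))
    (hX₁ : ∀ (a : Fin 2) (u v : Fin n → ZMod 2),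
      X₁ (EuclideanSpace.single (a, u, v) 1) =
        EuclideanSpace.single (a, u, v + if a = 1 then u else 0) 1)
    (hX₂ : ∀ (a : Fin 2) (u v : Fin n → ZMod 2),
      X₂ (EuclideanSpace.single (a, u, v) 1) =
        EuclideanSpace.single (a, u + (if a = 1 then v else 0), v) 1)
    (hM : ∀ (a : Fin 2) (u v : Fin n → ZMod 2),
      M (EuclideanSpace.single (a, u, v) 1) =
        tp3 (Pi.single a 1) (Pi.single u 1) (U (EuclideanSpace.single v 1)))
    (a : Fin 2) (ξ : EuclideanSpace ℂ (Fin n → ZMod 2)) :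
    X₁ (X₂ (M (X₂ (X₁ (tp3 (Pi.single a 1) ξ (EuclideanSpace.single 0 1)))))) =
      tp3 (Pi.single a 1) (if a = 1 then U ξ else ξ) (EuclideanSpace.single 0 1) := by
  rcases Fin.exists_fin_two.mp ⟨a, rfl⟩ with rfl | rfl
  · rw [if_neg zero_ne_one]
    exact gates_apply_tp3_control_zero hX₁ hX₂ hM hU0 ξ
  · rw [if_pos rfl]
    exact gates_apply_tp3_control_one hX₁ hX₂ hM ξ

/-- Implementation of the controlled operator `Λ(U)` by the five-gate sequence
`X₁ X₂ M X₂ X₁`, where `X₁ : e_(a,u,v) ↦ e_(a,u,v+a·u)` and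
`X₂ : e_(a,u,v) ↦ e_(a,u+a·v,v)` are controlled-XOR copy gates,
`M = 1 ⊗ 1 ⊗ U`, and `U` is unitary with `U e₀ = e₀`. -/
theorem stmt5 (n : ℕ)
    (U : EuclideanSpace ℂ (Fin n → ZMod 2) →L[ℂ] EuclideanSpace ℂ (Fin n → ZMod 2))
    (hU : U ∈ unitary (EuclideanSpace ℂ (Fin n → ZMod 2) →L[ℂ] EuclideanSpace ℂ (Fin n → ZMod 2)))
    (hU0 : U (EuclideanSpace.single 0 1) = EuclideanSpace.single 0 1)
    (X₁ X₂ M : EuclideanSpace ℂ (Fin 2 × (Fin n → ZMod 2) × (Fin n → ZMod 2)) →L[ℂ]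
      EuclideanSpace ℂ (Fin 2 × (Fin n → ZMod 2) × (Fin n → ZMod 2)))
    (hX₁ : ∀ (a : Fin 2) (u v : Fin n → ZMod 2),
      X₁ (EuclideanSpace.single (a, u, v) 1) =
        EuclideanSpace.single (a, u, v + if a = 1 then u else 0) 1)
    (hX₂ : ∀ (a : Fin 2) (u v : Fin n → ZMod 2),
      X₂ (EuclideanSpace.single (a, u, v) 1) =
        EuclideanSpace.single (a, u + (if a = 1 then v else 0), v) 1)
    (hM : ∀ (a : Fin 2) (u v : Fin n → ZMod 2),
      M (EuclideanSpace.single (a, u, v) 1) =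
        tp3 (Pi.single a 1) (Pi.single u 1) (U (EuclideanSpace.single v 1)))
    (a : Fin 2) (ξ : EuclideanSpace ℂ (Fin n → ZMod 2)) :
    X₁ (X₂ (M (X₂ (X₁ (tp3 (Pi.single a 1) ξ (EuclideanSpace.single 0 1)))))) =
      tp3 (Pi.single a 1) (if a = 1 then U ξ else ξ) (EuclideanSpace.single 0 1) :=
  stmt5_general n U hU0 X₁ X₂ M hX₁ hX₂ hM a ξ
end

section
/- Let Ω and Θ be finite index sets and F : Ω → Θ a function. Let (P_V)_{V∈Ω} and (Q_W)_{W∈Θ} each be families of orthogonal projection matrices on ℂ^M with pairwise orthogonal ranges (P_V P_{V'} = 0 for V ≠ V', Q_W Q_{W'} = 0 for W ≠ W'). Let U be a unitary matrix on ℂ^M and (T_W)_{W∈Θ} unitary matrices on ℂ^D. Define the unitary T = Σ_{W∈Θ} Q_W ⊗ T_W + (1 − Σ_{W∈Θ} Q_W) ⊗ 1 on ℂ^M ⊗ ℂ^D, and define F_T = Σ_{V∈Ω} P_V ⊗ T_{F(V)}. Suppose that U computes F with error probability at most ε, i.e. for every V ∈ Ω and every unit vector ξ ∈ ℂ^M with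 P_V ξ = ξ one has ‖Q_{F(V)}·(Uξ)‖² ≥ 1 − ε. Then for every unit vector ζ ∈ ℂ^M ⊗ ℂ^D satisfying ((Σ_{V∈Ω} P_V) ⊗ 1)ζ = ζ, one has ‖( (U ⊗ 1)⁻¹ · T · (U ⊗ 1) − F_T ) ζ‖ ≤ 2·√(|Ω|·ε); i.e. the operator (U⊗1)⁻¹ T (U⊗1) represents the measurement operator F_T with precision 2√(|Ω|ε). -/
open Matrix Kronecker

/-- The squared Euclidean norm of a complex vector. -/
noncomputable def enormSq {α : Type*} [Fintype α] (v : α → ℂ) : ℝ :=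
  ∑ i, Complex.normSq (v i)

/-!
Split `ζ = ∑ V, ζ_V` with `ζ_V = (P_V ⊗ 1) ζ`; the `P_V` are orthogonal projections, so
`∑ V, ‖ζ_V‖² = ‖ζ‖² = 1`. On `ζ_V` the operator `F_T` acts as `1 ⊗ T_{F V}`, which commutes with
`U ⊗ 1`, so the error on `ζ_V` is `‖(T - 1 ⊗ T_{F V}) η‖` with `η = (U ⊗ 1) ζ_V`. Both operators
are unitary (`T` is the measurement operator of the `Q_W` completed by `1 - ∑ W, Q_W`) and agree
on the range of `Q_{F V} ⊗ 1`, so this is at most `2 ‖((1 - Q_{F V}) U ⊗ 1) ζ_V‖ ≤ 2 √ε ‖ζ_V‖`,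
the last step by the error bound applied to each column of `ζ_V`. Summing over `V` and
Cauchy–Schwarz give `2 √ε ∑ V, ‖ζ_V‖ ≤ 2 √(|Ω| ε)`.
-/

section EnormSq

variable {ι m n : Type*} [Fintype m] [Fintype n]

lemma enormSq_nonneg (v : n → ℂ) : 0 ≤ enormSq v :=
  Finset.sum_nonneg fun i _ => Complex.normSq_nonneg (v i)

lemma sqrt_enormSq_eq_norm (v : n → ℂ) : √(enormSq v) = ‖WithLp.toLp 2 v‖ := by
  simp only [EuclideanSpace.norm_eq, enormSq, Complex.normSq_eq_norm_sq]

lemma sqrt_enormSq_sub_le (x y : n → ℂ) :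
    √(enormSq (x - y)) ≤ √(enormSq x) + √(enormSq y) := by
  simpa only [sqrt_enormSq_eq_norm, WithLp.toLp_sub] using norm_sub_le _ _

lemma sqrt_enormSq_sum_le (s : Finset ι) (v : ι → n → ℂ) :
    √(enormSq (∑ i ∈ s, v i)) ≤ ∑ i ∈ s, √(enormSq (v i)) := by
  simpa only [sqrt_enormSq_eq_norm, WithLp.toLp_sum] using norm_sum_le _ _

lemma enormSq_eq_re_dotProduct (v : n → ℂ) : enormSq v = (star v ⬝ᵥ v).re := by
  simp [enormSq, dotProduct, Complex.normSq_apply, Complex.mul_re]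

lemma enormSq_smul (a : ℂ) (v : n → ℂ) :
    enormSq (a • v) = Complex.normSq a * enormSq v := by
  simp [enormSq, Complex.normSq_mul, Finset.mul_sum]

lemma enormSq_mulVec (A : Matrix m n ℂ) (x : n → ℂ) :
    enormSq (A *ᵥ x) = (star x ⬝ᵥ (Aᴴ * A) *ᵥ x).re := by
  rw [enormSq_eq_re_dotProduct, star_mulVec, ← dotProduct_mulVec, mulVec_mulVec]

lemma enormSq_mulVec_of_conjTranspose_mul_self {A : Matrix m n ℂ} [DecidableEq n]
    (hA : Aᴴ * A = 1) (x : n → ℂ) : enormSq (A *ᵥ x) = enormSq x := by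
  rw [enormSq_mulVec, hA, one_mulVec, enormSq_eq_re_dotProduct]

lemma enormSq_mulVec_of_isHermitian_of_idempotent {B : Matrix n n ℂ} (hBh : B.IsHermitian)
    (hB2 : B * B = B) (x : n → ℂ) : enormSq (B *ᵥ x) = (star x ⬝ᵥ B *ᵥ x).re := by
  rw [enormSq_mulVec, hBh.eq, hB2]

lemma enormSq_mulVec_add_enormSq_one_sub_mulVec [DecidableEq n] {B : Matrix n n ℂ}
    (hBh : B.IsHermitian) (hB2 : B * B = B) (x : n → ℂ) :
    enormSq (B *ᵥ x) + enormSq ((1 - B) *ᵥ x) = enormSq x := by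
  have hB'h : (1 - B).IsHermitian := isHermitian_one.sub hBh
  have hB'2 : (1 - B) * (1 - B) = 1 - B := by
    simp only [sub_mul, mul_sub, hB2, one_mul, mul_one, sub_self, sub_zero]
  rw [enormSq_mulVec_of_isHermitian_of_idempotent hBh hB2,
    enormSq_mulVec_of_isHermitian_of_idempotent hB'h hB'2, enormSq_eq_re_dotProduct,
    ← Complex.add_re, ← dotProduct_add, ← add_mulVec, add_sub_cancel, one_mulVec]

lemma enormSq_mulVec_le_of_forall_enormSq_eq_one {A : Matrix m n ℂ} {P : Matrix n n ℂ} {c : ℝ}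
    (h : ∀ ξ, enormSq ξ = 1 → P *ᵥ ξ = ξ → enormSq (A *ᵥ ξ) ≤ c) {x : n → ℂ}
    (hx : P *ᵥ x = x) : enormSq (A *ᵥ x) ≤ c * enormSq x := by
  rcases (enormSq_nonneg x).eq_or_lt with hx0 | hxpos
  · have : x = 0 := by
      funext i
      exact Complex.normSq_eq_zero.mp <| (Finset.sum_eq_zero_iff_of_nonneg
        fun j _ => Complex.normSq_nonneg (x j)).mp hx0.symm i (Finset.mem_univ i)
    simp [this, enormSq]
  · have hnormSq : Complex.normSq ((√(enormSq x) : ℂ)⁻¹) = (enormSq x)⁻¹ := by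
      rw [Complex.normSq_inv, Complex.normSq_ofReal, Real.mul_self_sqrt hxpos.le]
    have key := h ((√(enormSq x) : ℂ)⁻¹ • x)
      (by rw [enormSq_smul, hnormSq, inv_mul_cancel₀ hxpos.ne'])
      (by rw [mulVec_smul, hx])
    rw [mulVec_smul, enormSq_smul, hnormSq, inv_mul_le_iff₀ hxpos] at key
    linarith

lemma sum_enormSq_mulVec_eq {s : Finset ι} {R : ι → Matrix n n ℂ}
    (hRh : ∀ i, (R i).IsHermitian) (hR2 : ∀ i, R i * R i = R i) {x : n → ℂ}
    (hx : (∑ i ∈ s, R i) *ᵥ x = x) : ∑ i ∈ s, enormSq (R i *ᵥ x) = enormSq x := by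
  simp_rw [enormSq_mulVec_of_isHermitian_of_idempotent (hRh _) (hR2 _)]
  rw [← Complex.re_sum, ← dotProduct_sum, ← sum_mulVec, hx, enormSq_eq_re_dotProduct]

lemma sqrt_enormSq_mulVec_sum_le [Fintype ι] (E : Matrix m n ℂ) (z : ι → n → ℂ) {a : ℝ}
    (ha : 0 ≤ a) (hE : ∀ i, √(enormSq (E *ᵥ z i)) ≤ a * √(enormSq (z i))) :
    √(enormSq (E *ᵥ ∑ i, z i)) ≤ a * √(Fintype.card ι * ∑ i, enormSq (z i)) := by
  have cauchySchwarz :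
      ∑ i, √(enormSq (z i)) ≤ √(Fintype.card ι * ∑ i, enormSq (z i)) := by
    refine Real.le_sqrt_of_sq_le ((sq_sum_le_card_mul_sum_sq ..).trans_eq ?_)
    simp [Real.sq_sqrt (enormSq_nonneg _)]
  calc √(enormSq (E *ᵥ ∑ i, z i)) ≤ ∑ i, √(enormSq (E *ᵥ z i)) := by
        rw [mulVec_sum]; exact sqrt_enormSq_sum_le _ _
    _ ≤ ∑ i, a * √(enormSq (z i)) := Finset.sum_le_sum fun i _ => hE i
    _ ≤ a * √(Fintype.card ι * ∑ i, enormSq (z i)) := by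
        rw [← Finset.mul_sum]; exact mul_le_mul_of_nonneg_left cauchySchwarz ha

lemma sqrt_enormSq_sub_mulVec_le [DecidableEq n] {A B : Matrix m n ℂ} {R : Matrix n n ℂ}
    (hA : Aᴴ * A = 1) (hB : Bᴴ * B = 1) (hR : A * R = B * R) (x : n → ℂ) :
    √(enormSq ((A - B) *ᵥ x)) ≤ 2 * √(enormSq ((1 - R) *ᵥ x)) := by
  have hx : (A - B) *ᵥ x = A *ᵥ ((1 - R) *ᵥ x) - B *ᵥ ((1 - R) *ᵥ x) := by
    rw [mulVec_mulVec, mulVec_mulVec, ← sub_mulVec, Matrix.mul_sub, Matrix.mul_sub,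
      Matrix.mul_one, Matrix.mul_one, hR, sub_sub_sub_cancel_right]
  rw [hx]
  refine (sqrt_enormSq_sub_le _ _).trans_eq ?_
  rw [enormSq_mulVec_of_conjTranspose_mul_self hA, enormSq_mulVec_of_conjTranspose_mul_self hB,
    two_mul]

end EnormSq

section Kronecker

variable {ι l m n p : Type*}

lemma sum_kronecker (s : Finset ι) (A : ι → Matrix l m ℂ) (B : Matrix n p ℂ) :
    (∑ i ∈ s, A i) ⊗ₖ B = ∑ i ∈ s, A i ⊗ₖ B := by
  ext
  simp [kroneckerMap_apply, Matrix.sum_apply, Finset.sum_mul]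

lemma sub_kronecker (A A' : Matrix l m ℂ) (B : Matrix n p ℂ) :
    (A - A') ⊗ₖ B = A ⊗ₖ B - A' ⊗ₖ B := by
  ext
  simp [kroneckerMap_apply, sub_mul]

lemma Matrix.IsHermitian.kronecker {A : Matrix m m ℂ} {B : Matrix n n ℂ} (hA : A.IsHermitian)
    (hB : B.IsHermitian) : (A ⊗ₖ B).IsHermitian := by
  rw [IsHermitian, conjTranspose_kronecker, hA.eq, hB.eq]

lemma kronecker_one_mulVec_apply [Fintype n] [Fintype p] [DecidableEq p] (B : Matrix m n ℂ)
    (x : n × p → ℂ) (i : m) (d : p) :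
    ((B ⊗ₖ (1 : Matrix p p ℂ)) *ᵥ x) (i, d) = (B *ᵥ fun j => x (j, d)) i := by
  simp [mulVec, dotProduct, Fintype.sum_prod_type, one_apply]

lemma enormSq_eq_sum_enormSq_col [Fintype m] [Fintype p] (x : m × p → ℂ) :
    enormSq x = ∑ d, enormSq fun i => x (i, d) := by
  rw [enormSq, Fintype.sum_prod_type, Finset.sum_comm]
  rfl

lemma enormSq_kronecker_one_mulVec_le [Fintype m] [Fintype n] [Fintype p] [DecidableEq p]
    {A : Matrix m n ℂ} {P : Matrix n n ℂ} {c : ℝ}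
    (h : ∀ y, P *ᵥ y = y → enormSq (A *ᵥ y) ≤ c * enormSq y) {x : n × p → ℂ}
    (hx : (P ⊗ₖ (1 : Matrix p p ℂ)) *ᵥ x = x) :
    enormSq ((A ⊗ₖ (1 : Matrix p p ℂ)) *ᵥ x) ≤ c * enormSq x := by
  rw [enormSq_eq_sum_enormSq_col, enormSq_eq_sum_enormSq_col, Finset.mul_sum]
  refine Finset.sum_le_sum fun d _ => ?_
  simp only [kronecker_one_mulVec_apply]
  refine h _ (funext fun i => ?_)
  simpa only [kronecker_one_mulVec_apply] using congrFun hx (i, d)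

end Kronecker

section MeasurementOperator

variable {κ m n : Type*} [Fintype κ] {E : κ → Matrix m m ℂ} {V : κ → Matrix n n ℂ}

variable (E V) in
def measurementOperator : Matrix (m × n) (m × n) ℂ :=
  ∑ k, E k ⊗ₖ V k

lemma measurementOperator_mul_kronecker [Fintype m] [Fintype n] (hE2 : ∀ k, E k * E k = E k)
    (hEo : ∀ k l, k ≠ l → E k * E l = 0) (j : κ) (B : Matrix n n ℂ) :
    measurementOperator E V * (E j ⊗ₖ B) = E j ⊗ₖ (V j * B) := by
  rw [measurementOperator, Finset.sum_mul, Finset.sum_eq_single j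
    (fun k _ hk => by rw [← mul_kronecker_mul, hEo k j hk, zero_kronecker]) (by simp),
    ← mul_kronecker_mul, hE2]

lemma kronecker_mul_measurementOperator [Fintype m] [Fintype n] (hE2 : ∀ k, E k * E k = E k)
    (hEo : ∀ k l, k ≠ l → E k * E l = 0) (j : κ) (B : Matrix n n ℂ) :
    (E j ⊗ₖ B) * measurementOperator E V = E j ⊗ₖ (B * V j) := by
  rw [measurementOperator, Finset.mul_sum, Finset.sum_eq_single j
    (fun k _ hk => by rw [← mul_kronecker_mul, hEo j k hk.symm, zero_kronecker]) (by simp),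
    ← mul_kronecker_mul, hE2]

lemma measurementOperator_mulVec_of_mulVec_eq [Fintype m] [Fintype n] [DecidableEq m]
    [DecidableEq n] (hE2 : ∀ k, E k * E k = E k) (hEo : ∀ k l, k ≠ l → E k * E l = 0)
    {j : κ} {z : m × n → ℂ} (hz : (E j ⊗ₖ (1 : Matrix n n ℂ)) *ᵥ z = z) :
    measurementOperator E V *ᵥ z = (1 ⊗ₖ V j) *ᵥ z := by
  have hEV : measurementOperator E V * (E j ⊗ₖ 1) = (1 ⊗ₖ V j) * (E j ⊗ₖ 1) := by
    rw [measurementOperator_mul_kronecker hE2 hEo, ← mul_kronecker_mul, one_mul]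
  rw [← hz, mulVec_mulVec, hEV, ← mulVec_mulVec, hz]

lemma conjTranspose_measurementOperator (hEh : ∀ k, (E k).IsHermitian) :
    (measurementOperator E V)ᴴ = measurementOperator E fun k => (V k)ᴴ := by
  simp only [measurementOperator, conjTranspose_sum, conjTranspose_kronecker, (hEh _).eq]

lemma conjTranspose_measurementOperator_mul_self [Fintype m] [Fintype n] [DecidableEq n]
    (hEh : ∀ k, (E k).IsHermitian) (hE2 : ∀ k, E k * E k = E k)
    (hEo : ∀ k l, k ≠ l → E k * E l = 0) (hV : ∀ k, (V k)ᴴ * V k = 1) :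
    (measurementOperator E V)ᴴ * measurementOperator E V = (∑ k, E k) ⊗ₖ 1 := by
  rw [conjTranspose_measurementOperator hEh, measurementOperator, Finset.sum_mul, sum_kronecker]
  exact Finset.sum_congr rfl fun k _ => by rw [kronecker_mul_measurementOperator hE2 hEo, hV]

end MeasurementOperator

section WithComplement

variable {ι m : Type*} [Fintype ι] {Q : ι → Matrix m m ℂ}

lemma mul_sum_eq_self [Fintype m] (hQ2 : ∀ i, Q i * Q i = Q i)
    (hQo : ∀ i j, i ≠ j → Q i * Q j = 0) (i : ι) : Q i * ∑ j, Q j = Q i := by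
  rw [Finset.mul_sum, Finset.sum_eq_single i (fun j _ hj => hQo i j hj.symm) (by simp), hQ2]

lemma sum_mul_eq_self [Fintype m] (hQ2 : ∀ i, Q i * Q i = Q i)
    (hQo : ∀ i j, i ≠ j → Q i * Q j = 0) (i : ι) : (∑ j, Q j) * Q i = Q i := by
  rw [Finset.sum_mul, Finset.sum_eq_single i (fun j _ hj => hQo j i hj) (by simp), hQ2]

variable [DecidableEq m]

variable (Q) in
def withComplement : Option ι → Matrix m m ℂ
  | none => 1 - ∑ i, Q i
  | some i => Q i

lemma isHermitian_withComplement (hQh : ∀ i, (Q i).IsHermitian) :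
    ∀ o, (withComplement Q o).IsHermitian
  | none => isHermitian_one.sub (isSelfAdjoint_sum _ fun i _ => hQh i)
  | some i => hQh i

lemma withComplement_mul_self [Fintype m] (hQ2 : ∀ i, Q i * Q i = Q i)
    (hQo : ∀ i j, i ≠ j → Q i * Q j = 0) :
    ∀ o, withComplement Q o * withComplement Q o = withComplement Q o
  | none => by
    rw [withComplement, sub_mul, one_mul, mul_sub, mul_one, Finset.sum_mul,
      Finset.sum_congr rfl fun i _ => mul_sum_eq_self hQ2 hQo i, sub_self, sub_zero]
  | some i => hQ2 i

lemma withComplement_mul_eq_zero [Fintype m] (hQ2 : ∀ i, Q i * Q i = Q i)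
    (hQo : ∀ i j, i ≠ j → Q i * Q j = 0) :
    ∀ o o', o ≠ o' → withComplement Q o * withComplement Q o' = 0
  | none, none, h => absurd rfl h
  | none, some j, _ => by rw [withComplement, withComplement, sub_mul, one_mul,
      sum_mul_eq_self hQ2 hQo, sub_self]
  | some i, none, _ => by rw [withComplement, withComplement, mul_sub, mul_one,
      mul_sum_eq_self hQ2 hQo, sub_self]
  | some i, some j, h => hQo i j (Option.some_injective _ |>.ne_iff.mp h)

lemma sum_withComplement : ∑ o, withComplement Q o = 1 := by
  simp [Fintype.sum_option, withComplement]

lemma measurementOperator_withComplement {n : Type*} [DecidableEq n] (T : ι → Matrix n n ℂ) :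
    measurementOperator (withComplement Q) (fun o => o.elim 1 T) =
      ∑ i, Q i ⊗ₖ T i + (1 - ∑ i, Q i) ⊗ₖ (1 : Matrix n n ℂ) := by
  rw [measurementOperator, Fintype.sum_option, add_comm]
  rfl

lemma conjTranspose_mul_self_measurementOperator_withComplement [Fintype m] {n : Type*}
    [Fintype n] [DecidableEq n] (hQh : ∀ i, (Q i).IsHermitian) (hQ2 : ∀ i, Q i * Q i = Q i)
    (hQo : ∀ i j, i ≠ j → Q i * Q j = 0) {T : ι → Matrix n n ℂ}
    (hT : ∀ i, (T i)ᴴ * T i = 1) :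
    (measurementOperator (withComplement Q) fun o => o.elim 1 T)ᴴ *
      measurementOperator (withComplement Q) (fun o => o.elim 1 T) = 1 := by
  rw [conjTranspose_measurementOperator_mul_self (isHermitian_withComplement hQh)
    (withComplement_mul_self hQ2 hQo) (withComplement_mul_eq_zero hQ2 hQo)
    (by rintro (_ | i) <;> simp [hT]), sum_withComplement, one_kronecker_one]

lemma measurementOperator_withComplement_mul_kronecker_one [Fintype m] {n : Type*} [Fintype n]
    [DecidableEq n] (hQ2 : ∀ i, Q i * Q i = Q i) (hQo : ∀ i j, i ≠ j → Q i * Q j = 0)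
    (T : ι → Matrix n n ℂ) (i : ι) :
    measurementOperator (withComplement Q) (fun o => o.elim 1 T) * (Q i ⊗ₖ 1) =
      Q i ⊗ₖ T i := by
  simpa [withComplement] using measurementOperator_mul_kronecker (V := fun o => o.elim 1 T)
    (withComplement_mul_self hQ2 hQo) (withComplement_mul_eq_zero hQ2 hQo) (some i) 1

end WithComplement

section Reversible

variable {m n : Type*} [Fintype m] [Fintype n] [DecidableEq m] [DecidableEq n]

lemma enormSq_one_sub_mul_mulVec_le {P : Matrix n n ℂ} {Q : Matrix m m ℂ} {U : Matrix m n ℂ}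
    {ε : ℝ} (hQh : Q.IsHermitian) (hQ2 : Q * Q = Q) (hU : Uᴴ * U = 1)
    (hcomp : ∀ ξ, enormSq ξ = 1 → P *ᵥ ξ = ξ → 1 - ε ≤ enormSq (Q *ᵥ (U *ᵥ ξ)))
    {x : n → ℂ} (hx : P *ᵥ x = x) : enormSq (((1 - Q) * U) *ᵥ x) ≤ ε * enormSq x := by
  refine enormSq_mulVec_le_of_forall_enormSq_eq_one (fun ξ hξ hPξ => ?_) hx
  have hsplit := enormSq_mulVec_add_enormSq_one_sub_mulVec hQh hQ2 (U *ᵥ ξ)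
  rw [enormSq_mulVec_of_conjTranspose_mul_self hU, hξ] at hsplit
  rw [← mulVec_mulVec]
  linarith [hcomp ξ hξ hPξ]

lemma sqrt_enormSq_conj_sub_mulVec_le {U R : Matrix m m ℂ} {A : Matrix (m × n) (m × n) ℂ}
    {B : Matrix n n ℂ} (hU : Uᴴ * U = 1) (hA : Aᴴ * A = 1) (hB : Bᴴ * B = 1)
    (hAR : A * (R ⊗ₖ 1) = R ⊗ₖ B) (z : m × n → ℂ) :
    √(enormSq (((U ⊗ₖ 1)⁻¹ * A * (U ⊗ₖ 1) - 1 ⊗ₖ B) *ᵥ z)) ≤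
      2 * √(enormSq ((((1 - R) * U) ⊗ₖ (1 : Matrix n n ℂ)) *ᵥ z)) := by
  have hUb : (U ⊗ₖ (1 : Matrix n n ℂ))ᴴ * (U ⊗ₖ 1) = 1 := by
    rw [conjTranspose_kronecker, conjTranspose_one, ← mul_kronecker_mul, hU, one_mul,
      one_kronecker_one]
  have hUbH : (U ⊗ₖ (1 : Matrix n n ℂ))ᴴᴴ * (U ⊗ₖ 1)ᴴ = 1 := by
    rw [conjTranspose_conjTranspose, mul_eq_one_comm, hUb]
  have hB' : ((1 : Matrix m m ℂ) ⊗ₖ B)ᴴ * (1 ⊗ₖ B) = 1 := by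
    rw [conjTranspose_kronecker, conjTranspose_one, ← mul_kronecker_mul, hB, one_mul,
      one_kronecker_one]
  have hconj : (U ⊗ₖ (1 : Matrix n n ℂ))ᴴ * A * (U ⊗ₖ 1) - 1 ⊗ₖ B =
      (U ⊗ₖ 1)ᴴ * ((A - 1 ⊗ₖ B) * (U ⊗ₖ 1)) := by
    rw [Matrix.sub_mul, Matrix.mul_sub, Matrix.mul_assoc, conjTranspose_kronecker,
      conjTranspose_one, ← mul_kronecker_mul, ← mul_kronecker_mul, one_mul, mul_one, one_mul,
      hU]
  rw [inv_eq_left_inv hUb, hconj, ← mulVec_mulVec, enormSq_mulVec_of_conjTranspose_mul_self hUbH,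
    ← mulVec_mulVec]
  refine (sqrt_enormSq_sub_mulVec_le hA hB' (R := R ⊗ₖ 1) ?_ _).trans_eq ?_
  · rw [hAR, ← mul_kronecker_mul, one_mul, mul_one]
  · rw [mulVec_mulVec, ← one_kronecker_one, ← sub_kronecker, ← mul_kronecker_mul, one_mul]

end Reversible

theorem stmt9_general (M D Ω Θ : Type) [Fintype M] [Fintype D] [Fintype Ω] [Fintype Θ]
    [DecidableEq M] [DecidableEq D]
    (F : Ω → Θ)
    (P : Ω → Matrix M M ℂ)
    (hPh : ∀ V, (P V).IsHermitian) (hP2 : ∀ V, P V * P V = P V)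
    (hPo : ∀ V V', V ≠ V' → P V * P V' = 0)
    (Q : Θ → Matrix M M ℂ)
    (hQh : ∀ W, (Q W).IsHermitian) (hQ2 : ∀ W, Q W * Q W = Q W)
    (hQo : ∀ W W', W ≠ W' → Q W * Q W' = 0)
    (U : Matrix M M ℂ) (hU : U ∈ Matrix.unitaryGroup M ℂ)
    (T : Θ → Matrix D D ℂ) (hT : ∀ W, T W ∈ Matrix.unitaryGroup D ℂ)
    (ε : ℝ)
    (hcomp : ∀ (V : Ω) (ξ : M → ℂ), enormSq ξ = 1 → P V *ᵥ ξ = ξ →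
      1 - ε ≤ enormSq (Q (F V) *ᵥ (U *ᵥ ξ)))
    (ζ : M × D → ℂ) (hζ : enormSq ζ = 1)
    (hζP : ((∑ V, P V) ⊗ₖ (1 : Matrix D D ℂ)) *ᵥ ζ = ζ) :
    Real.sqrt (enormSq
      ((((U ⊗ₖ (1 : Matrix D D ℂ))⁻¹ *
          ((∑ W, Q W ⊗ₖ T W) + ((1 - ∑ W, Q W) ⊗ₖ (1 : Matrix D D ℂ))) *
          (U ⊗ₖ (1 : Matrix D D ℂ))) -
        (∑ V, P V ⊗ₖ T (F V))) *ᵥ ζ)) ≤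
      2 * Real.sqrt (Fintype.card Ω * ε) := by
  have hUU : Uᴴ * U = 1 := mem_unitaryGroup_iff'.mp hU
  have hTT W : (T W)ᴴ * T W = 1 := mem_unitaryGroup_iff'.mp (hT W)
  rw [← measurementOperator_withComplement]
  set z := fun V => (P V ⊗ₖ (1 : Matrix D D ℂ)) *ᵥ ζ
  have hz V : (P V ⊗ₖ (1 : Matrix D D ℂ)) *ᵥ z V = z V := by
    rw [mulVec_mulVec, ← mul_kronecker_mul, hP2, one_mul]
  have hcomponent V : √(enormSq (((U ⊗ₖ 1)⁻¹ *
      measurementOperator (withComplement Q) (fun o => o.elim 1 T) * (U ⊗ₖ 1) -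
        measurementOperator P (fun V => T (F V))) *ᵥ z V)) ≤
      2 * √ε * √(enormSq (z V)) := by
    rw [sub_mulVec, measurementOperator_mulVec_of_mulVec_eq hP2 hPo (hz V), ← sub_mulVec,
      mul_assoc (2 : ℝ), ← Real.sqrt_mul' _ (enormSq_nonneg _)]
    refine (sqrt_enormSq_conj_sub_mulVec_le hUU
      (conjTranspose_mul_self_measurementOperator_withComplement hQh hQ2 hQo hTT) (hTT (F V))
      (measurementOperator_withComplement_mul_kronecker_one hQ2 hQo T (F V)) (z V)).trans ?_
    gcongr
    exact enormSq_kronecker_one_mulVec_le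
      (fun x hx => enormSq_one_sub_mul_mulVec_le (hQh _) (hQ2 _) hUU (hcomp V) hx) (hz V)
  have hζz : ζ = ∑ V, z V := by rw [← sum_mulVec, ← sum_kronecker, hζP]
  have hnorm : ∑ V, enormSq (z V) = 1 :=
    (sum_enormSq_mulVec_eq (fun V => (hPh V).kronecker isHermitian_one)
      (fun V => by rw [← mul_kronecker_mul, hP2, one_mul]) (by rwa [← sum_kronecker])).trans hζ
  rw [hζz]
  refine (sqrt_enormSq_mulVec_sum_le _ z (by positivity) hcomponent).trans_eq ?_
  rw [hnorm, mul_one, Real.sqrt_mul (Nat.cast_nonneg _)]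
  ring

/-- Making quantum computation reversible: if a unitary `U` computes
`F : Ω → Θ` with error probability `≤ ε` (with respect to families of pairwise
orthogonal projections `P_V`, `Q_W`), and `T = Σ_W Q_W ⊗ T_W + (1 − Σ_W Q_W) ⊗ 1`
is a measurement operator for the target observable, then `(U⊗1)⁻¹ T (U⊗1)`
represents the measurement operator `F_T = Σ_V P_V ⊗ T_{F(V)}` with precision
`2√(|Ω|ε)` on the subspace supported by the `P_V`. -/
theorem stmt9 (M D Ω Θ : Type) [Fintype M] [Fintype D] [Fintype Ω] [Fintype Θ]
    [DecidableEq M] [DecidableEq D]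
    (F : Ω → Θ)
    (P : Ω → Matrix M M ℂ)
    (hPh : ∀ V, (P V).IsHermitian) (hP2 : ∀ V, P V * P V = P V)
    (hPo : ∀ V V', V ≠ V' → P V * P V' = 0)
    (Q : Θ → Matrix M M ℂ)
    (hQh : ∀ W, (Q W).IsHermitian) (hQ2 : ∀ W, Q W * Q W = Q W)
    (hQo : ∀ W W', W ≠ W' → Q W * Q W' = 0)
    (U : Matrix M M ℂ) (hU : U ∈ Matrix.unitaryGroup M ℂ)
    (T : Θ → Matrix D D ℂ) (hT : ∀ W, T W ∈ Matrix.unitaryGroup D ℂ)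
    (ε : ℝ) (hε : 0 ≤ ε)
    (hcomp : ∀ (V : Ω) (ξ : M → ℂ), enormSq ξ = 1 → P V *ᵥ ξ = ξ →
      1 - ε ≤ enormSq (Q (F V) *ᵥ (U *ᵥ ξ)))
    (ζ : M × D → ℂ) (hζ : enormSq ζ = 1)
    (hζP : ((∑ V, P V) ⊗ₖ (1 : Matrix D D ℂ)) *ᵥ ζ = ζ) :
    Real.sqrt (enormSq
      ((((U ⊗ₖ (1 : Matrix D D ℂ))⁻¹ *
          ((∑ W, Q W ⊗ₖ T W) + ((1 - ∑ W, Q W) ⊗ₖ (1 : Matrix D D ℂ))) *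
          (U ⊗ₖ (1 : Matrix D D ℂ))) -
        (∑ V, P V ⊗ₖ T (F V))) *ᵥ ζ)) ≤
      2 * Real.sqrt (Fintype.card Ω * ε) :=
  stmt9_general M D Ω Θ F P hPh hP2 hPo Q hQh hQ2 hQo U hU T hT ε hcomp ζ hζ hζP
end

section
/- Let k be a natural number and let ε be a real number with 0 ≤ ε ≤ 1/2. Then the tail of the binomial distribution satisfies Σ_{j : 2j ≥ k, 0 ≤ j ≤ k} (k choose j) · ε^j · (1−ε)^{k−j} ≤ (2·√(ε·(1−ε)))^k. In particular, repeating a computation with error probability ε independently k times and taking the majority answer fails with probability at most λ^k where λ = 2√(ε(1−ε)) < 1 when ε < 1/2. -/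
/-!
Since `ε ≤ 1 - ε`, every term of the tail with `2j ≥ k` satisfies
`ε ^ j (1 - ε) ^ (k - j) ≤ (√(ε (1 - ε))) ^ k`: trading the `2j - k` surplus factors `√ε`
for `√(1 - ε)` only increases the term. Summing the binomial coefficients over all `j`
then contributes the factor `2 ^ k`.
-/

theorem sq_pow_mul_sq_pow_le_mul_pow {R : Type*} [CommSemiring R] [PartialOrder R]
    [IsOrderedRing R] {a b : R} (ha : 0 ≤ a) (hab : a ≤ b) {j k : ℕ}
    (hjk : j ≤ k) (hkj : k ≤ 2 * j) :
    (a ^ 2) ^ j * (b ^ 2) ^ (k - j) ≤ (a * b) ^ k := by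
  have hb : 0 ≤ b := ha.trans hab
  calc (a ^ 2) ^ j * (b ^ 2) ^ (k - j)
      = a ^ k * (a ^ (2 * j - k) * b ^ (2 * (k - j))) := by
        rw [← pow_mul, ← pow_mul, ← mul_assoc, ← pow_add, Nat.add_sub_cancel' hkj]
    _ ≤ a ^ k * (b ^ (2 * j - k) * b ^ (2 * (k - j))) := by gcongr
    _ = (a * b) ^ k := by
        rw [← pow_add, show 2 * j - k + 2 * (k - j) = k by omega, mul_pow]

theorem pow_mul_one_sub_pow_le_sqrt_pow {ε : ℝ} (h0 : 0 ≤ ε) (h1 : ε ≤ 1 / 2) {j k : ℕ}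
    (hjk : j ≤ k) (hkj : k ≤ 2 * j) :
    ε ^ j * (1 - ε) ^ (k - j) ≤ Real.sqrt (ε * (1 - ε)) ^ k := by
  have h0' : 0 ≤ 1 - ε := by linarith
  have hle : Real.sqrt ε ≤ Real.sqrt (1 - ε) := Real.sqrt_le_sqrt (by linarith)
  simpa only [Real.sq_sqrt h0, Real.sq_sqrt h0', ← Real.sqrt_mul h0] using
    sq_pow_mul_sq_pow_le_mul_pow (Real.sqrt_nonneg ε) hle hjk hkj

/-- Tail bound for the binomial distribution: the probability that at least
half of `k` independent trials with failure probability `ε ≤ 1/2` fail is at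
most `(2√(ε(1−ε)))^k`. -/
theorem stmt13 (k : ℕ) (ε : ℝ) (h0 : 0 ≤ ε) (h1 : ε ≤ 1 / 2) :
    ∑ j ∈ (Finset.range (k + 1)).filter (fun j => k ≤ 2 * j),
        (k.choose j : ℝ) * ε ^ j * (1 - ε) ^ (k - j) ≤
      (2 * Real.sqrt (ε * (1 - ε))) ^ k := by
  set s := Real.sqrt (ε * (1 - ε))
  calc ∑ j ∈ (Finset.range (k + 1)).filter (fun j => k ≤ 2 * j),
        (k.choose j : ℝ) * ε ^ j * (1 - ε) ^ (k - j)
      ≤ ∑ j ∈ (Finset.range (k + 1)).filter (fun j => k ≤ 2 * j), (k.choose j : ℝ) * s ^ k := by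
        refine Finset.sum_le_sum fun j hj => ?_
        obtain ⟨hjk, hkj⟩ := Finset.mem_filter.mp hj
        rw [mul_assoc]
        gcongr
        exact pow_mul_one_sub_pow_le_sqrt_pow h0 h1 (Nat.lt_succ_iff.mp (Finset.mem_range.mp hjk)) hkj
    _ ≤ ∑ j ∈ Finset.range (k + 1), (k.choose j : ℝ) * s ^ k :=
        Finset.sum_le_sum_of_subset_of_nonneg (Finset.filter_subset _ _)
          fun _ _ _ => by positivity
    _ = (2 * s) ^ k := by
        rw [← Finset.sum_mul, ← Nat.cast_sum, Nat.sum_range_choose, mul_pow]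
        push_cast
        rfl
end
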